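/- arXiv:2108.13633 — 7 statements merged into one kernel-verified Lean document; each statement's English description precedes it below -/
import Mathlib

section
/- For distinct indices i, j, k in {1,...,n}, the matrices Y_{i,j} (with (i,j) entry 2, (i,i) entry -1, other diagonal entries 1, other entries 0) satisfy (Y_{j,i}Y_{i,j}Y_{k,j}Y_{j,k}Y_{i,k}Y_{k,i})² = I. -/
/-!
`Y_{a,b}` acts on column vectors by replacing the coordinate `v a` with its reflection
`2 v b - v a` through `v b`, leaving all other coordinates alone. Hence the product of the six
matrices moves only the coordinates `i, j, k`, on which it acts by the integer matrix
`!![5, -2, -2; 6, -3, -2; 6, -2, -3]`, and that matrix squares to the identity.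
-/

/-- The matrix `Y_{i,j}` (for `i ≠ j`): `(i,j)` entry `2`, `(i,i)` entry `-1`,
other diagonal entries `1`, other entries `0`. -/
def Ymat (n : ℕ) (i j : Fin n) : Matrix (Fin n) (Fin n) ℤ :=
  fun k l => if k = i ∧ l = j then 2 else if k = l then (if k = i then -1 else 1) else 0

open Matrix

theorem Ymat_mulVec {n : ℕ} {a b : Fin n} (hab : a ≠ b) (v : Fin n → ℤ) :
    Ymat n a b *ᵥ v = Function.update v a (2 * v b - v a) := by
  ext x
  by_cases hx : x = a
  · subst hx
    simp [mulVec, dotProduct, Ymat, ite_mul, Finset.sum_ite, Finset.filter_ne',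
      Finset.filter_eq', hab]
    ring
  · simp [mulVec, dotProduct, Ymat, hx]

theorem Ymat_hexagon_mulVec {n : ℕ} {i j k : Fin n} (hij : i ≠ j) (hik : i ≠ k) (hjk : j ≠ k)
    (v : Fin n → ℤ) :
    (Ymat n j i * Ymat n i j * Ymat n k j * Ymat n j k * Ymat n i k * Ymat n k i) *ᵥ v =
      Function.update (Function.update (Function.update v
        i (5 * v i - 2 * v j - 2 * v k))
        j (6 * v i - 3 * v j - 2 * v k))
        k (6 * v i - 2 * v j - 3 * v k) := by
  simp only [← mulVec_mulVec, Ymat_mulVec hij, Ymat_mulVec hij.symm, Ymat_mulVec hik,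
    Ymat_mulVec hik.symm, Ymat_mulVec hjk, Ymat_mulVec hjk.symm]
  ext x
  simp only [Function.update_apply, hij, hik, hjk, hij.symm, hik.symm, hjk.symm, if_true,
    if_false]
  split_ifs <;> subst_vars <;> ring

theorem Ymat_rel_four_general {n : ℕ} (i j k : Fin n)
    (hij : i ≠ j) (hik : i ≠ k) (hjk : j ≠ k) :
    (Ymat n j i * Ymat n i j * Ymat n k j * Ymat n j k * Ymat n i k * Ymat n k i) ^ 2 = 1 := by
  refine ext_iff_mulVec.2 fun v => ?_
  rw [sq, ← mulVec_mulVec, Ymat_hexagon_mulVec hij hik hjk, Ymat_hexagon_mulVec hij hik hjk,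
    one_mulVec]
  ext x
  simp only [Function.update_apply, hij, hik, hjk, hij.symm, hik.symm, hjk.symm, if_true,
    if_false]
  split_ifs <;> subst_vars <;> ring

/-- For distinct `i, j, k`, `(Y_{j,i}Y_{i,j}Y_{k,j}Y_{j,k}Y_{i,k}Y_{k,i})² = 1`. -/
theorem Ymat_rel_four {n : ℕ} (hn : 3 ≤ n) (i j k : Fin n)
    (hij : i ≠ j) (hik : i ≠ k) (hjk : j ≠ k) :
    (Ymat n j i * Ymat n i j * Ymat n k j * Ymat n j k * Ymat n i k * Ymat n k i) ^ 2 = 1 :=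
  Ymat_rel_four_general i j k hij hik hjk
end

section
/- Let G be a group with a presentation in generators Y_{i,j} (1 ≤ i ≤ g-1, 1 ≤ j ≤ g, i ≠ j) subject to relators including Y_{i,j}² = 1, (Y_{i,j}Y_{k,j})² = 1, (Y_{i,j}Y_{k,l})² = 1, (Y_{i,j}Y_{i,k}Y_{j,k})² = 1, and (Y_{i,j}Y_{i,k}Y_{i,l})² = 1 for distinct indices. Define Y_{g,j} = (Y_{1,j}Y_{1,g})(Y_{2,j}Y_{2,g})⋯(Y_{j-1,j}Y_{j-1,g})(Y_{j+1,j}Y_{j+1,g})⋯(Y_{g-1,j}Y_{g-1,g})Y_{j,g}. Then for all 1 ≤ i ≤ g-1 with i ≠ j, Y_{i,j} commutes with Y_{g,j}: Y_{i,j}Y_{g,j} = Y_{g,j}Y_{i,j}. -/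
/-!
Write `a = Y_{i,j}`, `b = Y_{i,g}`, `c = Y_{j,g}` and `F_k = Y_{k,j}Y_{k,g}`, so that
`Y_{g,j} = (∏_{k ≠ j} F_k) c`. Moving `a` to the right through the product, it commutes with
every `F_k` with `k ≠ i`, and passing `F_i = ab` turns it into its conjugate `b⁻¹ab`, which again
commutes with every `F_k` with `k ≠ i`. Finally `b⁻¹ab · c = c · a`, because `abc` is an
involution whose inverse is `cba` and `b` commutes with `c`.
-/

section Group

variable {G : Type*} [Group G]

lemma inv_eq_self_of_sq_eq_one {x : G} (hx : x ^ 2 = 1) : x⁻¹ = x :=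
  (mul_eq_one_iff_eq_inv.mp (sq x ▸ hx)).symm

lemma commute_of_sq_eq_one {x y : G} (hx : x ^ 2 = 1) (hy : y ^ 2 = 1)
    (hxy : (x * y) ^ 2 = 1) : Commute x y := by
  have h := inv_eq_self_of_sq_eq_one hxy
  rwa [mul_inv_rev, inv_eq_self_of_sq_eq_one hx, inv_eq_self_of_sq_eq_one hy, eq_comm] at h

lemma mul_mul_eq_rev_of_sq_eq_one {a b c : G} (ha : a ^ 2 = 1) (hb : b ^ 2 = 1) (hc : c ^ 2 = 1)
    (habc : (a * b * c) ^ 2 = 1) : a * b * c = c * b * a := by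
  have h := inv_eq_self_of_sq_eq_one habc
  rwa [mul_inv_rev, mul_inv_rev, inv_eq_self_of_sq_eq_one ha, inv_eq_self_of_sq_eq_one hb,
    inv_eq_self_of_sq_eq_one hc, ← mul_assoc, eq_comm] at h

lemma inv_mul_mul_mul_eq_mul {a b c : G} (hbc : Commute b c) (habc : a * b * c = c * b * a) :
    b⁻¹ * a * b * c = c * a :=
  calc b⁻¹ * a * b * c = b⁻¹ * (c * b * a) := by rw [← habc]; group
    _ = b⁻¹ * (b * c) * a := by rw [hbc.eq]; group
    _ = c * a := by group

end Group

lemma mul_prod_map_eq_prod_map_mul {M ι : Type*} [Monoid M] {F : ι → M} {a z : M} {i : ι}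
    {L : List ι} (hL : L.Nodup) (hi : i ∈ L) (hconj : a * F i = F i * z)
    (ha : ∀ k ∈ L, k ≠ i → Commute a (F k)) (hz : ∀ k ∈ L, k ≠ i → Commute z (F k)) :
    a * (L.map F).prod = (L.map F).prod * z := by
  induction L with
  | nil => simp at hi
  | cons k L ih =>
    obtain ⟨hkL, hL⟩ := List.nodup_cons.mp hL
    rw [List.map_cons, List.prod_cons]
    by_cases hki : k = i
    · subst hki
      have hzL : Commute z (L.map F).prod := Commute.list_prod_right _ _ fun x hx => by
        obtain ⟨k', hk', rfl⟩ := List.mem_map.mp hx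
        exact hz k' (List.mem_cons_of_mem _ hk') (ne_of_mem_of_not_mem hk' hkL)
      rw [← mul_assoc, hconj, mul_assoc, hzL.eq, mul_assoc]
    · have hiL : i ∈ L := (List.mem_cons.mp hi).resolve_left (Ne.symm hki)
      rw [← mul_assoc, (ha k List.mem_cons_self hki).eq, mul_assoc,
        ih hL hiL (fun k' hk' => ha k' (List.mem_cons_of_mem _ hk'))
          (fun k' hk' => hz k' (List.mem_cons_of_mem _ hk')), mul_assoc]

section Presentation

variable {G : Type*} [Group G] {g : ℕ} {Y : ℕ → ℕ → G}

lemma commute_Y_Y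
    (h1 : ∀ i j, 1 ≤ i → i ≤ g - 1 → 1 ≤ j → j ≤ g → i ≠ j → (Y i j) ^ 2 = 1)
    (h2a : ∀ i j k, 1 ≤ i → i ≤ g - 1 → 1 ≤ j → j ≤ g → 1 ≤ k → k ≤ g - 1 →
      i ≠ j → i ≠ k → j ≠ k → (Y i j * Y k j) ^ 2 = 1)
    (h2b : ∀ i j k l, 1 ≤ i → i ≤ g - 1 → 1 ≤ j → j ≤ g → 1 ≤ k → k ≤ g - 1 → 1 ≤ l → l ≤ g →
      i ≠ j → i ≠ k → i ≠ l → j ≠ k → j ≠ l → k ≠ l → (Y i j * Y k l) ^ 2 = 1)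
    ⦃i m k n : ℕ⦄ (hi1 : 1 ≤ i) (hi2 : i ≤ g - 1) (hm1 : 1 ≤ m) (hm2 : m ≤ g)
    (hk1 : 1 ≤ k) (hk2 : k ≤ g - 1) (hn1 : 1 ≤ n) (hn2 : n ≤ g)
    (hik : i ≠ k) (him : i ≠ m) (hin : i ≠ n) (hkm : k ≠ m) (hkn : k ≠ n) :
    Commute (Y i m) (Y k n) := by
  refine commute_of_sq_eq_one (h1 i m hi1 hi2 hm1 hm2 him) (h1 k n hk1 hk2 hn1 hn2 hkn) ?_
  rcases eq_or_ne m n with rfl | hmn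
  · exact h2a i m k hi1 hi2 hm1 hm2 hk1 hk2 him hik hkm.symm
  · exact h2b i m k n hi1 hi2 hm1 hm2 hk1 hk2 hn1 hn2 him hik hin hkm.symm hmn hkn

end Presentation

lemma mem_filter_range'_ne_iff {g j k : ℕ} :
    k ∈ (List.range' 1 (g - 1)).filter (fun k => k ≠ j) ↔ 1 ≤ k ∧ k ≤ g - 1 ∧ k ≠ j := by
  simp only [List.mem_filter, List.mem_range'_1, decide_eq_true_eq]
  omega

theorem Ygj_comm_general {G : Type*} [Group G] (g : ℕ) (Y : ℕ → ℕ → G)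
    (h1 : ∀ i j, 1 ≤ i → i ≤ g - 1 → 1 ≤ j → j ≤ g → i ≠ j → (Y i j) ^ 2 = 1)
    (h2a : ∀ i j k, 1 ≤ i → i ≤ g - 1 → 1 ≤ j → j ≤ g → 1 ≤ k → k ≤ g - 1 →
      i ≠ j → i ≠ k → j ≠ k → (Y i j * Y k j) ^ 2 = 1)
    (h2b : ∀ i j k l, 1 ≤ i → i ≤ g - 1 → 1 ≤ j → j ≤ g → 1 ≤ k → k ≤ g - 1 → 1 ≤ l → l ≤ g →
      i ≠ j → i ≠ k → i ≠ l → j ≠ k → j ≠ l → k ≠ l → (Y i j * Y k l) ^ 2 = 1)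
    (h3a : ∀ i j k, 1 ≤ i → i ≤ g - 1 → 1 ≤ j → j ≤ g - 1 → 1 ≤ k → k ≤ g →
      i ≠ j → i ≠ k → j ≠ k → (Y i j * Y i k * Y j k) ^ 2 = 1)
    (j : ℕ) (hj1 : 1 ≤ j) (hj2 : j ≤ g - 1)
    (Ygj : G)
    (hYgj : Ygj = ((((List.range' 1 (g - 1)).filter (fun k => k ≠ j)).map
        (fun k => Y k j * Y k g)).prod) * Y j g)
    (i : ℕ) (hi1 : 1 ≤ i) (hi2 : i ≤ g - 1) (hij : i ≠ j) :
    Y i j * Ygj = Ygj * Y i j := by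
  set L := (List.range' 1 (g - 1)).filter (fun k => k ≠ j)
  have hYY := commute_Y_Y h1 h2a h2b
  have hF : ∀ m, m = j ∨ m = g → ∀ k ∈ L, k ≠ i → Commute (Y i m) (Y k j * Y k g) := by
    intro m hm k hk hki
    obtain ⟨hk1, hk2, hkj⟩ := mem_filter_range'_ne_iff.mp hk
    exact (hYY hi1 hi2 (m := m) (by omega) (by omega) hk1 hk2 hj1 (by omega)
      (Ne.symm hki) (by omega) hij (by omega) hkj).mul_right
      (hYY hi1 hi2 (by omega) (by omega) hk1 hk2 (by omega) le_rfl (Ne.symm hki) (by omega)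
        (by omega) (by omega) (by omega))
  have hcycle : (Y i g)⁻¹ * Y i j * Y i g * Y j g = Y j g * Y i j :=
    inv_mul_mul_mul_eq_mul
      (hYY hi1 hi2 (by omega) le_rfl hj1 hj2 (by omega) le_rfl hij (by omega) (by omega) (by omega)
        (by omega))
      (mul_mul_eq_rev_of_sq_eq_one (h1 i j hi1 hi2 hj1 (by omega) hij)
        (h1 i g hi1 hi2 (by omega) le_rfl (by omega)) (h1 j g hj1 hj2 (by omega) le_rfl (by omega))
        (h3a i j g hi1 hi2 hj1 hj2 (by omega) le_rfl hij (by omega) (by omega)))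
  have hprod : Y i j * (L.map fun k => Y k j * Y k g).prod
      = (L.map fun k => Y k j * Y k g).prod * ((Y i g)⁻¹ * Y i j * Y i g) :=
    mul_prod_map_eq_prod_map_mul ((List.nodup_range' ..).filter _)
      (mem_filter_range'_ne_iff.mpr ⟨hi1, hi2, hij⟩) (by group) (hF j (.inl rfl))
      fun k hk hki => ((hF g (.inr rfl) k hk hki).inv_left.mul_left
        (hF j (.inl rfl) k hk hki)).mul_left (hF g (.inr rfl) k hk hki)
  rw [hYgj, ← mul_assoc, hprod, mul_assoc, hcycle, mul_assoc]

/-- In a group generated by elements `Y i j` (`1 ≤ i ≤ g-1`, `1 ≤ j ≤ g`, `i ≠ j`)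
satisfying the relations `Y_{i,j}² = 1`, `(Y_{i,j}Y_{k,j})² = 1`, `(Y_{i,j}Y_{k,l})² = 1`,
`(Y_{i,j}Y_{i,k}Y_{j,k})² = 1` and `(Y_{i,j}Y_{i,k}Y_{i,l})² = 1` for distinct indices,
the element
`Y_{g,j} = (Y_{1,j}Y_{1,g})⋯(Y_{j-1,j}Y_{j-1,g})(Y_{j+1,j}Y_{j+1,g})⋯(Y_{g-1,j}Y_{g-1,g})Y_{j,g}`
commutes with `Y_{i,j}` for every `1 ≤ i ≤ g-1` with `i ≠ j`. -/
theorem Ygj_comm {G : Type*} [Group G] (g : ℕ) (hg : 3 ≤ g) (Y : ℕ → ℕ → G)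
    (h1 : ∀ i j, 1 ≤ i → i ≤ g - 1 → 1 ≤ j → j ≤ g → i ≠ j → (Y i j) ^ 2 = 1)
    (h2a : ∀ i j k, 1 ≤ i → i ≤ g - 1 → 1 ≤ j → j ≤ g → 1 ≤ k → k ≤ g - 1 →
      i ≠ j → i ≠ k → j ≠ k → (Y i j * Y k j) ^ 2 = 1)
    (h2b : ∀ i j k l, 1 ≤ i → i ≤ g - 1 → 1 ≤ j → j ≤ g → 1 ≤ k → k ≤ g - 1 → 1 ≤ l → l ≤ g →
      i ≠ j → i ≠ k → i ≠ l → j ≠ k → j ≠ l → k ≠ l → (Y i j * Y k l) ^ 2 = 1)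
    (h3a : ∀ i j k, 1 ≤ i → i ≤ g - 1 → 1 ≤ j → j ≤ g - 1 → 1 ≤ k → k ≤ g →
      i ≠ j → i ≠ k → j ≠ k → (Y i j * Y i k * Y j k) ^ 2 = 1)
    (h3b : ∀ i j k l, 1 ≤ i → i ≤ g - 1 → 1 ≤ j → j ≤ g → 1 ≤ k → k ≤ g → 1 ≤ l → l ≤ g →
      i ≠ j → i ≠ k → i ≠ l → j ≠ k → j ≠ l → k ≠ l → (Y i j * Y i k * Y i l) ^ 2 = 1)
    (j : ℕ) (hj1 : 1 ≤ j) (hj2 : j ≤ g - 1)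
    (Ygj : G)
    (hYgj : Ygj = ((((List.range' 1 (g - 1)).filter (fun k => k ≠ j)).map
        (fun k => Y k j * Y k g)).prod) * Y j g)
    (i : ℕ) (hi1 : 1 ≤ i) (hi2 : i ≤ g - 1) (hij : i ≠ j) :
    Y i j * Ygj = Ygj * Y i j :=
  Ygj_comm_general g Y h1 h2a h2b h3a j hj1 hj2 Ygj hYgj i hi1 hi2 hij
end

section
/- Let A be a group generated by elements x_{i,j} indexed by pairs 1 ≤ i < j ≤ g, subject to the relations that every generator has order dividing 2 and every two generators commute (so A is a ℤ/2ℤ-module), together with the relations r_i = 1 for 2 ≤ i ≤ g-1, where r_i = (x_{1,i}x_{1,g})⋯(x_{i-1,i}x_{i-1,g})(x_{i,i+1}x_{i+1,g})⋯(x_{i,g-1}x_{g-1,g}), and additionally x_{1,g}x_{2,g}⋯x_{g-1,g} = 1 if g is odd. Then A is isomorphic to (ℤ/2ℤ)^{C(g-1,2)} if g is odd, and to (ℤ/2ℤ)^{C(g-1,2)+1} if g is even. -/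
/-- Index set for the generators `x_{i,j}`, `1 ≤ i < j ≤ g`. -/
def PairIdx (g : ℕ) := {p : ℕ × ℕ // 1 ≤ p.1 ∧ p.1 < p.2 ∧ p.2 ≤ g}

/-- The generator `x_{a,b}` as an element of the free group (for in-range pairs). -/
def xg (g a b : ℕ) : FreeGroup (PairIdx g) :=
  if h : 1 ≤ a ∧ a < b ∧ b ≤ g then FreeGroup.of ⟨(a, b), h⟩ else 1

/-- The word `r_i = (x_{1,i}x_{1,g})⋯(x_{i-1,i}x_{i-1,g})(x_{i,i+1}x_{i+1,g})⋯(x_{i,g-1}x_{g-1,g})`. -/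
def rword (g i : ℕ) : FreeGroup (PairIdx g) :=
  (((List.range' 1 (i - 1)).map (fun k => xg g k i * xg g k g)).prod) *
    (((List.range' (i + 1) (g - 1 - i)).map (fun k => xg g i k * xg g k g)).prod)

/-- The relators: squares of generators, commutators of pairs of generators,
the words `r_i` for `2 ≤ i ≤ g-1`, and `x_{1,g}x_{2,g}⋯x_{g-1,g}` if `g` is odd. -/
def rels (g : ℕ) : Set (FreeGroup (PairIdx g)) :=
  {w | (∃ p : PairIdx g, w = FreeGroup.of p * FreeGroup.of p) ∨
    (∃ p q : PairIdx g,
      w = FreeGroup.of p * FreeGroup.of q * (FreeGroup.of p)⁻¹ * (FreeGroup.of q)⁻¹) ∨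
    (∃ i, 2 ≤ i ∧ i ≤ g - 1 ∧ w = rword g i) ∨
    (Odd g ∧ w = ((List.range' 1 (g - 1)).map (fun k => xg g k g)).prod)}

/-!
Written additively, the group is the `ZMod 2`-vector space on the `x_{i,j}` modulo the relators.
For `2 ≤ i ≤ g - 1`, the relator `r_i` contains `x_{1,i}` and otherwise only `x_{1,g}` and
generators `x_{a,b}` with `a ≥ 2`; for odd `g` the last relator is `x_{1,g}` plus the `x_{k,g}`,
`k ≥ 2`.
Solving `r_i` for `x_{1,i}`, and for odd `g` the last relator for `x_{1,g}`, shows that the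
`x_{a,b}` with `2 ≤ a < b ≤ g`, together with `x_{1,g}` when `g` is even, form a basis. There are
`C(g-1,2)` pairs `2 ≤ a < b ≤ g`.
-/

open Finset
open scoped commutatorElement

section Elimination

variable {V : Type*} [AddCommGroup V] (g : ℕ)

/- `y a b` stands for the image of `x_{a,b}`: `relSum g y i` is `r_i` and `topSum g y` is
`x_{1,g}⋯x_{g-1,g}`, written additively. -/
def relSum (y : ℕ → ℕ → V) (i : ℕ) : V :=
  ∑ k ∈ Ico 1 i, (y k i + y k g) + ∑ k ∈ Ico (i + 1) g, (y i k + y k g)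

def topSum (y : ℕ → ℕ → V) : V :=
  ∑ k ∈ Ico 1 g, y k g

def elimSum (y : ℕ → ℕ → V) (i : ℕ) : V :=
  ∑ k ∈ Ico 2 i, y k i + ∑ k ∈ Ico (i + 1) g, y i k + topSum g y - y i g

theorem relSum_eq_add_elimSum (y : ℕ → ℕ → V) {i : ℕ} (hi : 2 ≤ i) (hig : i < g) :
    relSum g y i = y 1 i + elimSum g y i := by
  have hrow : ∑ k ∈ Ico 1 i, y k i = y 1 i + ∑ k ∈ Ico 2 i, y k i :=
    sum_eq_sum_Ico_succ_bot (by omega) _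
  have hcol : topSum g y = ∑ k ∈ Ico 1 i, y k g + (y i g + ∑ k ∈ Ico (i + 1) g, y k g) := by
    rw [topSum, ← sum_Ico_consecutive _ (by omega : 1 ≤ i) hig.le, sum_eq_sum_Ico_succ_bot hig]
  rw [relSum, elimSum, hcol, sum_add_distrib, sum_add_distrib, hrow]
  abel

/- The eliminations of the different `x_{1,i}` do not interfere. -/
theorem elimSum_congr {y y' : ℕ → ℕ → V} {i : ℕ} (hi : 2 ≤ i) (hig : i < g)
    (h : ∀ a b, 2 ≤ a → a < b → b ≤ g → y a b = y' a b) (h1g : y 1 g = y' 1 g) :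
    elimSum g y i = elimSum g y' i := by
  have hcol : ∀ k ∈ Ico 1 g, y k g = y' k g := by
    intro k hk
    rw [mem_Ico] at hk
    rcases (by omega : k = 1 ∨ 2 ≤ k ∧ k < g) with rfl | ⟨hk2, hkg⟩
    exacts [h1g, h k g hk2 hkg le_rfl]
  rw [elimSum, elimSum, topSum, topSum, sum_congr rfl hcol, h i g hi hig le_rfl,
    sum_congr rfl fun k hk => h k i (mem_Ico.1 hk).1 (mem_Ico.1 hk).2 hig.le,
    sum_congr rfl fun k hk => h i k hi (by rw [mem_Ico] at hk; omega) (mem_Ico.1 hk).2.le]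

theorem map_elimSum {V' F : Type*} [AddCommGroup V'] [FunLike F V V'] [AddMonoidHomClass F V V']
    (f : F) (y : ℕ → ℕ → V) (i : ℕ) :
    f (elimSum g y i) = elimSum g (fun a b => f (y a b)) i := by
  simp [elimSum, topSum, map_sum]

end Elimination

namespace PresentedGroup

variable {α : Type*} {rels : Set (FreeGroup α)}

theorem mul_comm_of_commutator_mem
    (h : ∀ a b : α, ⁅FreeGroup.of a, FreeGroup.of b⁆ ∈ rels)
    (x y : PresentedGroup rels) : x * y = y * x := by
  have hgen (a b : α) : (of a : PresentedGroup rels) * of b = of b * of a :=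
    commutatorElement_eq_one_iff_mul_comm.1 <|
      (map_commutatorElement _ _ _).symm.trans (one_of_mem (h a b))
  have hx (b : α) : x * of b = of b * x := Subgroup.mem_centralizer_singleton_iff.1 <|
    generated_by rels _ (fun a => Subgroup.mem_centralizer_singleton_iff.2 (hgen a b)) x
  exact (Subgroup.mem_centralizer_singleton_iff.1 <|
    generated_by rels _ (fun b => Subgroup.mem_centralizer_singleton_iff.2 (hx b).symm) y).symm

abbrev commGroupOfCommutatorMem
    (h : ∀ a b : α, ⁅FreeGroup.of a, FreeGroup.of b⁆ ∈ rels) :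
    CommGroup (PresentedGroup rels) :=
  { mul_comm := mul_comm_of_commutator_mem h }

theorem sq_eq_one_of_mem
    (hc : ∀ a b : α, ⁅FreeGroup.of a, FreeGroup.of b⁆ ∈ rels)
    (hs : ∀ a : α, FreeGroup.of a * FreeGroup.of a ∈ rels) (x : PresentedGroup rels) : x ^ 2 = 1 :=
  letI := commGroupOfCommutatorMem hc
  generated_by rels (powMonoidHom 2 : PresentedGroup rels →* _).ker
    (fun a => (sq (of a)).trans <| (map_mul _ _ _).symm.trans (one_of_mem (hs a))) x

end PresentedGroup

theorem map_ofMul_list_prod_range' {M V : Type*} [Monoid M] [AddCommMonoid V]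
    (F : Additive M →+ V) (w : ℕ → M) (a n : ℕ) :
    F (.ofMul ((List.range' a n).map w).prod) = ∑ k ∈ Ico a (a + n), F (.ofMul (w k)) := by
  rw [← List.toFinset_range'_1, List.sum_toFinset _ List.nodup_range', ofMul_list_prod,
    map_list_sum, List.map_map, List.map_map]
  rfl

theorem xg_of_mem {g a b : ℕ} (h : 1 ≤ a ∧ a < b ∧ b ≤ g) :
    xg g a b = FreeGroup.of ⟨(a, b), h⟩ :=
  dif_pos h

section Words

variable {g : ℕ} {V : Type*} [AddCommGroup V] (F : Additive (FreeGroup (PairIdx g)) →+ V)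

theorem map_ofMul_rword {i : ℕ} (hi : 1 ≤ i) (hig : i < g) :
    F (.ofMul (rword g i)) = relSum g (fun a b => F (.ofMul (xg g a b))) i := by
  rw [rword, ofMul_mul, map_add, map_ofMul_list_prod_range', map_ofMul_list_prod_range',
    Nat.add_sub_cancel' hi, show i + 1 + (g - 1 - i) = g by omega]
  simp only [relSum, ofMul_mul, map_add]

theorem map_ofMul_topWord (hg : 0 < g) :
    F (.ofMul ((List.range' 1 (g - 1)).map (fun k => xg g k g)).prod) =
      topSum g (fun a b => F (.ofMul (xg g a b))) := by
  rw [map_ofMul_list_prod_range', Nat.add_sub_cancel' hg, topSum]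

end Words

section Presented

variable (g : ℕ)

instance : CommGroup (PresentedGroup (rels g)) :=
  PresentedGroup.commGroupOfCommutatorMem fun p q => Or.inr (Or.inl ⟨p, q, rfl⟩)

instance : Module (ZMod 2) (Additive (PresentedGroup (rels g))) :=
  AddCommGroup.zmodModule fun x => PresentedGroup.sq_eq_one_of_mem
    (fun p q => Or.inr (Or.inl ⟨p, q, rfl⟩)) (fun p => Or.inl ⟨p, rfl⟩) x.toMul

def presGen (a b : ℕ) : Additive (PresentedGroup (rels g)) :=
  .ofMul (PresentedGroup.mk (rels g) (xg g a b))

theorem relSum_presGen {i : ℕ} (hi : 2 ≤ i) (hig : i ≤ g - 1) :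
    relSum g (presGen g) i = 0 := by
  have h := map_ofMul_rword (MonoidHom.toAdditive (PresentedGroup.mk (rels g))) (i := i)
    (by omega) (by omega)
  rw [MonoidHom.toAdditive_apply_apply, toMul_ofMul,
    PresentedGroup.one_of_mem (Or.inr (Or.inr (Or.inl ⟨i, hi, hig, rfl⟩))), ofMul_one] at h
  exact h.symm

theorem topSum_presGen (ho : Odd g) : topSum g (presGen g) = 0 := by
  have h := map_ofMul_topWord (MonoidHom.toAdditive (PresentedGroup.mk (rels g))) ho.pos
  rw [MonoidHom.toAdditive_apply_apply, toMul_ofMul,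
    PresentedGroup.one_of_mem (Or.inr (Or.inr (Or.inr ⟨ho, rfl⟩))), ofMul_one] at h
  exact h.symm

end Presented

section FreeVectors

variable (g : ℕ)

def upperPairs : Finset (ℕ × ℕ) :=
  {p ∈ Icc 2 g ×ˢ Icc 2 g | p.1 < p.2}

def freePairs : Finset (ℕ × ℕ) :=
  if Even g then insert (1, g) (upperPairs g) else upperPairs g

theorem mem_upperPairs {p : ℕ × ℕ} : p ∈ upperPairs g ↔ 2 ≤ p.1 ∧ p.1 < p.2 ∧ p.2 ≤ g := by
  simp only [upperPairs, mem_filter, mem_product, mem_Icc]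
  omega

theorem mem_freePairs {p : ℕ × ℕ} :
    p ∈ freePairs g ↔ (2 ≤ p.1 ∧ p.1 < p.2 ∧ p.2 ≤ g) ∨ (Even g ∧ p = (1, g)) := by
  unfold freePairs
  split_ifs with he <;> simp [mem_upperPairs, he, or_comm]

theorem isPair_of_mem_freePairs (hg : 1 < g) {p : ℕ × ℕ} (hp : p ∈ freePairs g) :
    1 ≤ p.1 ∧ p.1 < p.2 ∧ p.2 ≤ g := by
  rcases (mem_freePairs g).1 hp with h | ⟨-, rfl⟩
  exacts [⟨by omega, h.2⟩, ⟨le_rfl, hg, le_rfl⟩]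

theorem card_upperPairs : #(upperPairs g) = (g - 1).choose 2 := by
  rw [upperPairs, card_product_filter_lt, Nat.card_Icc, show g + 1 - 2 = g - 1 by omega]

theorem card_freePairs : #(freePairs g) = (g - 1).choose 2 + if Even g then 1 else 0 := by
  unfold freePairs
  split_ifs
  · rw [card_insert_of_notMem (by simp [mem_upperPairs]), card_upperPairs]
  · rw [card_upperPairs, add_zero]

def basisVec (p : ℕ × ℕ) : freePairs g → ZMod 2 :=
  if h : p ∈ freePairs g then Pi.single ⟨p, h⟩ 1 else 0

theorem basisVec_of_mem {p : ℕ × ℕ} (hp : p ∈ freePairs g) :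
    basisVec g p = Pi.single ⟨p, hp⟩ 1 :=
  dif_pos hp

/- The images of the generators: `x_{a,b}` with `a ≥ 2`, and `x_{1,g}` for even `g`, are basis
vectors; `x_{1,g}` for odd `g` is solved from the last relator and `x_{1,b}`, `b < g`, from
`r_b`. -/
def topVec : freePairs g → ZMod 2 :=
  if Even g then basisVec g (1, g) else -∑ k ∈ Ico 2 g, basisVec g (k, g)

def freeGenVec (a b : ℕ) : freePairs g → ZMod 2 :=
  if a = 1 then topVec g else basisVec g (a, b)

def genVec (a b : ℕ) : freePairs g → ZMod 2 :=
  if a = 1 ∧ b ≠ g then -elimSum g (freeGenVec g) b else freeGenVec g a b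

theorem genVec_of_two_le {a : ℕ} (b : ℕ) (ha : 2 ≤ a) : genVec g a b = basisVec g (a, b) := by
  rw [genVec, if_neg (by omega), freeGenVec, if_neg (by omega)]

theorem genVec_one_self : genVec g 1 g = topVec g := by
  rw [genVec, if_neg (by simp), freeGenVec, if_pos rfl]

variable {g}

theorem genVec_of_mem_freePairs {p : ℕ × ℕ} (hp : p ∈ freePairs g) :
    genVec g p.1 p.2 = basisVec g p := by
  rcases (mem_freePairs g).1 hp with h | ⟨he, rfl⟩
  exacts [genVec_of_two_le g p.2 h.1, by rw [genVec_one_self, topVec, if_pos he]]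

theorem relSum_eq_zero_of_eq_genVec {y : ℕ → ℕ → freePairs g → ZMod 2}
    (hy : ∀ a b, 1 ≤ a → a < b → b ≤ g → y a b = genVec g a b) {i : ℕ} (hi : 2 ≤ i)
    (hig : i < g) : relSum g y i = 0 := by
  have hfree : elimSum g y i = elimSum g (freeGenVec g) i := by
    refine elimSum_congr g hi hig (fun a b ha hab hb => ?_) ?_
    · rw [hy a b (by omega) hab hb, genVec, if_neg (by omega)]
    · rw [hy 1 g le_rfl (by omega) le_rfl, genVec, if_neg (by simp)]
  rw [relSum_eq_add_elimSum g y hi hig, hy 1 i le_rfl (by omega) hig.le, genVec,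
    if_pos ⟨rfl, hig.ne⟩, hfree, neg_add_cancel]

theorem topSum_eq_zero_of_eq_genVec {y : ℕ → ℕ → freePairs g → ZMod 2}
    (hy : ∀ a b, 1 ≤ a → a < b → b ≤ g → y a b = genVec g a b) (hg : 1 < g) (ho : Odd g) :
    topSum g y = 0 := by
  have hcol : ∑ k ∈ Ico 2 g, y k g = ∑ k ∈ Ico 2 g, basisVec g (k, g) :=
    sum_congr rfl fun k hk => by
      rw [mem_Ico] at hk
      rw [hy k g (by omega) hk.2 le_rfl, genVec_of_two_le g g hk.1]
  rw [topSum, sum_eq_sum_Ico_succ_bot hg, hy 1 g le_rfl hg le_rfl, genVec_one_self, topVec,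
    if_neg (Nat.not_even_iff_odd.2 ho), hcol, neg_add_cancel]

theorem lift_genVec_eq_one (hg : 1 < g) :
    ∀ r ∈ rels g,
      FreeGroup.lift (fun p : PairIdx g => Multiplicative.ofAdd (genVec g p.1.1 p.1.2)) r = 1 := by
  set F := MonoidHom.toAdditiveLeft
    (FreeGroup.lift fun p : PairIdx g => Multiplicative.ofAdd (genVec g p.1.1 p.1.2))
  have hF (a b : ℕ) (h : 1 ≤ a ∧ a < b ∧ b ≤ g) : F (.ofMul (xg g a b)) = genVec g a b := by
    rw [xg_of_mem h]
    exact congrArg Multiplicative.toAdd FreeGroup.lift_apply_of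
  rintro r (⟨p, rfl⟩ | ⟨p, q, rfl⟩ | ⟨i, hi, hig, rfl⟩ | ⟨ho, rfl⟩)
  · simp [← ofAdd_add, ZModModule.add_self]
  · simp only [map_mul, map_inv]
    exact commutatorElement_eq_one_iff_mul_comm.2 (mul_comm _ _)
  · exact (map_ofMul_rword F (by omega) (by omega)).trans
      (relSum_eq_zero_of_eq_genVec (fun a b ha hab hb => hF a b ⟨ha, hab, hb⟩) hi (by omega))
  · exact (map_ofMul_topWord F (by omega)).trans
      (topSum_eq_zero_of_eq_genVec (fun a b ha hab hb => hF a b ⟨ha, hab, hb⟩) hg ho)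

end FreeVectors

section Equivalence

variable (g : ℕ)

def ofFreeVec : (freePairs g → ZMod 2) →ₗ[ZMod 2] Additive (PresentedGroup (rels g)) :=
  Fintype.linearCombination (ZMod 2) fun s => presGen g s.1.1 s.1.2

theorem ofFreeVec_basisVec {p : ℕ × ℕ} (hp : p ∈ freePairs g) :
    ofFreeVec g (basisVec g p) = presGen g p.1 p.2 := by
  rw [basisVec_of_mem g hp, ofFreeVec, Fintype.linearCombination_apply_single, one_smul]

theorem ofFreeVec_topVec (hg : 1 < g) : ofFreeVec g (topVec g) = presGen g 1 g := by
  unfold topVec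
  split_ifs with he
  · exact ofFreeVec_basisVec g (by simp [freePairs, he])
  · have h0 := topSum_presGen g (Nat.not_even_iff_odd.1 he)
    rw [topSum, sum_eq_sum_Ico_succ_bot hg] at h0
    rw [map_neg, map_sum, ← neg_eq_of_add_eq_zero_left h0]
    refine congrArg Neg.neg (sum_congr rfl fun k hk => ofFreeVec_basisVec g ?_)
    exact (mem_freePairs g).2 (Or.inl (by rw [mem_Ico] at hk; omega))

theorem ofFreeVec_genVec (hg : 1 < g) {a b : ℕ} (h : 1 ≤ a ∧ a < b ∧ b ≤ g) :
    ofFreeVec g (genVec g a b) = presGen g a b := by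
  have hupper {a b : ℕ} (ha : 2 ≤ a) (hab : a < b) (hb : b ≤ g) :
      ofFreeVec g (genVec g a b) = presGen g a b := by
    rw [genVec_of_two_le g b ha]
    exact ofFreeVec_basisVec g ((mem_freePairs g).2 (Or.inl ⟨ha, hab, hb⟩))
  obtain ⟨ha | rfl, hab, hb⟩ : (2 ≤ a ∨ a = 1) ∧ a < b ∧ b ≤ g := ⟨by omega, h.2⟩
  · exact hupper ha hab hb
  obtain rfl | hbg := hb.eq_or_lt
  · rw [genVec_one_self, ofFreeVec_topVec _ hg]
  have hfree : elimSum g (fun a b => ofFreeVec g (freeGenVec g a b)) b =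
      elimSum g (presGen g) b := by
    refine elimSum_congr g hab hbg (fun a b ha hab hb => ?_) ?_
    · rw [← hupper ha hab hb, genVec, if_neg (by omega)]
    · rw [freeGenVec, if_pos rfl, ofFreeVec_topVec g hg]
  have h0 := relSum_presGen g (i := b) hab (by omega)
  rw [relSum_eq_add_elimSum g _ hab hbg] at h0
  rw [genVec, if_pos ⟨rfl, hbg.ne⟩, map_neg, map_elimSum, hfree, neg_eq_of_add_eq_zero_left h0]

def toFreeVec (hg : 1 < g) :
    Additive (PresentedGroup (rels g)) →ₗ[ZMod 2] (freePairs g → ZMod 2) :=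
  (MonoidHom.toAdditiveLeft (PresentedGroup.toGroup (lift_genVec_eq_one hg))).toZModLinearMap 2

theorem toFreeVec_presGen (hg : 1 < g) {a b : ℕ} (h : 1 ≤ a ∧ a < b ∧ b ≤ g) :
    toFreeVec g hg (presGen g a b) = genVec g a b := by
  rw [presGen, xg_of_mem h]
  exact congrArg Multiplicative.toAdd (PresentedGroup.toGroup.of _)

theorem toFreeVec_comp_ofFreeVec (hg : 1 < g) : toFreeVec g hg ∘ₗ ofFreeVec g = LinearMap.id :=
  (Pi.basisFun (ZMod 2) (freePairs g)).ext fun ⟨p, hp⟩ => by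
    rw [Pi.basisFun_apply, LinearMap.comp_apply, ← basisVec_of_mem g hp, ofFreeVec_basisVec g hp,
      toFreeVec_presGen g hg (isPair_of_mem_freePairs g hg hp), genVec_of_mem_freePairs hp,
      LinearMap.id_apply]

theorem ofFreeVec_comp_toFreeVec (hg : 1 < g) : ofFreeVec g ∘ₗ toFreeVec g hg = LinearMap.id :=
  LinearMap.toAddMonoidHom_injective <| Additive.addMonoidHom_ext _ _ <|
    PresentedGroup.ext fun p => by
      have hp : Additive.ofMul (PresentedGroup.of p) = presGen g p.1.1 p.1.2 := by
        rw [presGen, xg_of_mem p.2]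
        rfl
      show ofFreeVec g (toFreeVec g hg (.ofMul (PresentedGroup.of p))) =
        .ofMul (PresentedGroup.of p)
      rw [hp, toFreeVec_presGen g hg p.2, ofFreeVec_genVec g hg p.2]

def linearEquivFreeVec (hg : 1 < g) :
    Additive (PresentedGroup (rels g)) ≃ₗ[ZMod 2] (freePairs g → ZMod 2) :=
  .ofLinearMap (toFreeVec g hg) (ofFreeVec g) (toFreeVec_comp_ofFreeVec g hg)
    (ofFreeVec_comp_toFreeVec g hg)

end Equivalence

theorem nonempty_mulEquiv_of_card_freePairs {g n : ℕ} (hg : 1 < g) (hn : #(freePairs g) = n) :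
    Nonempty (PresentedGroup (rels g) ≃* Multiplicative (Fin n → ZMod 2)) := by
  have e : freePairs g ≃ Fin n := Fintype.equivFinOfCardEq (by rw [Fintype.card_coe, hn])
  exact ⟨AddEquiv.toMultiplicativeRight ((linearEquivFreeVec g hg).trans
    (LinearEquiv.funCongrLeft (ZMod 2) (ZMod 2) e.symm)).toAddEquiv⟩

/-- The presented group is isomorphic to `(ℤ/2ℤ)^{C(g-1,2)}` if `g` is odd,
and to `(ℤ/2ℤ)^{C(g-1,2)+1}` if `g` is even. -/
theorem presentedGroup_iso_elementary_abelian (g : ℕ) (hg : 3 ≤ g) :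
    (Odd g → Nonempty (PresentedGroup (rels g) ≃*
      Multiplicative (Fin ((g - 1).choose 2) → ZMod 2))) ∧
    (Even g → Nonempty (PresentedGroup (rels g) ≃*
      Multiplicative (Fin ((g - 1).choose 2 + 1) → ZMod 2))) := by
  refine ⟨fun ho => nonempty_mulEquiv_of_card_freePairs (by omega) ?_,
    fun he => nonempty_mulEquiv_of_card_freePairs (by omega) ?_⟩
  · rw [card_freePairs, if_neg (Nat.not_even_iff_odd.2 ho), add_zero]
  · rw [card_freePairs, if_pos he]
end

section
/- Let G be a group and let c₁, ..., c_k be elements of G satisfying the braid relations c_i c_{i+1} c_i = c_{i+1} c_i c_{i+1} for 1 ≤ i ≤ k-1 and the commutation relations c_i c_j = c_j c_i for |i-j| ≥ 2. Then (c₁c₂⋯c_k)^{k+1} lies in the subgroup of G generated by all conjugates of the squares c_i² (i.e., the subgroup generated by {g c_i² g⁻¹ : g ∈ G, 1 ≤ i ≤ k}). -/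
/-!
Write `Δₖ = c₁⋯cₖ`. The braid and commutation relations say that conjugation by `Δₖ` shifts
`cᵢ ↦ cᵢ₊₁` for `1 ≤ i < k`. Pushing the descending words `cₖ cₖ₋₁ ⋯` through `Δₖ` with this shift
gives `Δₖ^k = Δₖ₋₁^k · (cₖ ⋯ c₁)`, hence
`Δₖ^(k+1) = Δₖ₋₁^k · (cₖ ⋯ c₂ c₁² c₂ ⋯ cₖ)`.
The second factor is an iterated conjugate of `c₁²` times squares `cᵢ²`, so it lies in the normal
closure of the squares, and induction on `k` concludes.
-/

section

variable {G : Type*} [Group G]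

structure IsBraidChain (c : ℕ → G) (k : ℕ) : Prop where
  braid : ∀ i, 1 ≤ i → i + 1 ≤ k → c i * c (i + 1) * c i = c (i + 1) * c i * c (i + 1)
  comm : ∀ i j, 1 ≤ i → j ≤ k → i + 2 ≤ j → c i * c j = c j * c i

def chainProd (c : ℕ → G) (k : ℕ) : G := ((List.range' 1 k).map c).prod

/-- `descProd c k m = c k * c (k - 1) * ⋯ * c (k - m + 1)`. -/
def descProd (c : ℕ → G) : ℕ → ℕ → G
  | _, 0 => 1
  | k, m + 1 => c k * descProd c (k - 1) m

@[simp]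
theorem chainProd_zero (c : ℕ → G) : chainProd c 0 = 1 := rfl

theorem chainProd_succ (c : ℕ → G) (k : ℕ) : chainProd c (k + 1) = chainProd c k * c (k + 1) := by
  simp [chainProd, List.range'_concat, add_comm]

theorem commute_chainProd {c : ℕ → G} {k : ℕ} {x : G} (h : ∀ i, 1 ≤ i → i ≤ k → Commute x (c i)) :
    Commute x (chainProd c k) := by
  refine Commute.list_prod_right _ _ fun y hy => ?_
  obtain ⟨i, hi, rfl⟩ := List.mem_map.1 hy
  rw [List.mem_range'_1] at hi
  exact h i hi.1 (by omega)

theorem descProd_succ_succ (c : ℕ → G) (k m : ℕ) :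
    descProd c (k + 1) (m + 1) = c (k + 1) * descProd c k m := rfl

theorem mul_descProd_of_shift {c : ℕ → G} {x : G} {k m : ℕ}
    (hx : ∀ i, 1 ≤ i → i ≤ k → x * c i = c (i + 1) * x) (hm : m ≤ k) :
    x * descProd c k m = descProd c (k + 1) m * x := by
  induction m generalizing k with
  | zero => simp [descProd]
  | succ m ih =>
    obtain ⟨k, rfl⟩ : ∃ k', k = k' + 1 := ⟨k - 1, by omega⟩
    have ih' := ih (k := k) (fun i hi hik => hx i hi (by omega)) (by omega)
    rw [descProd_succ_succ, descProd_succ_succ, ← mul_assoc, hx (k + 1) (by omega) le_rfl,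
      mul_assoc, ih', mul_assoc]

theorem normalClosure_sq_mono (c : ℕ → G) {k l : ℕ} (hkl : k ≤ l) :
    Subgroup.normalClosure ((fun i => c i ^ 2) '' Set.Icc 1 k) ≤
      Subgroup.normalClosure ((fun i => c i ^ 2) '' Set.Icc 1 l) :=
  Subgroup.normalClosure_mono (Set.image_mono (Set.Icc_subset_Icc_right hkl))

/-- `cₖ ⋯ c₁ · c₁ ⋯ cₖ = cₖ (cₖ₋₁ ⋯ c₁ · c₁ ⋯ cₖ₋₁) cₖ⁻¹ · cₖ²`. -/
theorem descProd_mul_chainProd_mem_normalClosure (c : ℕ → G) (k : ℕ) :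
    descProd c k k * chainProd c k ∈
      Subgroup.normalClosure ((fun i => c i ^ 2) '' Set.Icc 1 k) := by
  induction k with
  | zero => simp [descProd]
  | succ k ih =>
    have hsq : c (k + 1) ^ 2 ∈ Subgroup.normalClosure ((fun i => c i ^ 2) '' Set.Icc 1 (k + 1)) :=
      Subgroup.subset_normalClosure ⟨k + 1, ⟨by omega, le_rfl⟩, rfl⟩
    have hconj := Subgroup.normalClosure_normal.conj_mem _
      (normalClosure_sq_mono c k.le_succ ih) (c (k + 1))
    have hsplit : descProd c (k + 1) (k + 1) * chainProd c (k + 1) =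
        c (k + 1) * (descProd c k k * chainProd c k) * (c (k + 1))⁻¹ * c (k + 1) ^ 2 := by
      rw [descProd_succ_succ, chainProd_succ]
      group
    rw [hsplit]
    exact mul_mem hconj hsq

theorem closure_conj_sq_eq_normalClosure (c : ℕ → G) (k : ℕ) :
    Subgroup.closure {x : G | ∃ h : G, ∃ i, 1 ≤ i ∧ i ≤ k ∧ x = h * (c i) ^ 2 * h⁻¹} =
      Subgroup.normalClosure ((fun i => c i ^ 2) '' Set.Icc 1 k) := by
  rw [Subgroup.normalClosure]
  congr 1
  ext x
  simp only [Set.mem_ofPred_eq, Group.mem_conjugatesOfSet_iff, Set.mem_image, Set.mem_Icc,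
    isConj_iff]
  constructor
  · rintro ⟨h, i, h1, h2, rfl⟩
    exact ⟨_, ⟨i, ⟨h1, h2⟩, rfl⟩, h, rfl⟩
  · rintro ⟨_, ⟨i, ⟨h1, h2⟩, rfl⟩, h, rfl⟩
    exact ⟨h, i, h1, h2, rfl⟩

namespace IsBraidChain

variable {c : ℕ → G} {k : ℕ}

theorem mono (hc : IsBraidChain c (k + 1)) : IsBraidChain c k :=
  ⟨fun i hi hik => hc.braid i hi (by omega), fun i j hi hj hij => hc.comm i j hi (by omega) hij⟩

theorem chainProd_mul_of_lt (hc : IsBraidChain c k) {i : ℕ} (hi : 1 ≤ i) (hik : i < k) :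
    chainProd c k * c i = c (i + 1) * chainProd c k := by
  induction k with
  | zero => omega
  | succ k ih =>
    rcases Nat.lt_succ_iff_lt_or_eq.1 hik with hik | rfl
    · rw [chainProd_succ, mul_assoc, ← hc.comm i (k + 1) hi le_rfl (by omega), ← mul_assoc,
        ih hc.mono hik, mul_assoc]
    · obtain ⟨k, rfl⟩ : ∃ k', i = k' + 1 := ⟨i - 1, by omega⟩
      have hcomm : Commute (c (k + 1 + 1)) (chainProd c k) :=
        commute_chainProd fun j hj hjk => Commute.symm (hc.comm j (k + 2) hj le_rfl (by omega))
      rw [chainProd_succ, chainProd_succ, mul_assoc, mul_assoc, ← mul_assoc (c (k + 1)),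
        hc.braid (k + 1) hi le_rfl, ← mul_assoc, ← mul_assoc, ← hcomm.eq]
      simp only [mul_assoc]

theorem chainProd_succ_pow {m : ℕ} (hc : IsBraidChain c (k + 1)) (hm : m ≤ k + 1) :
    chainProd c (k + 1) ^ m = chainProd c k ^ m * descProd c (k + 1) m := by
  induction m with
  | zero => simp [descProd]
  | succ m ih =>
    have hshift : chainProd c (k + 1) * descProd c k m =
        descProd c (k + 1) m * chainProd c (k + 1) :=
      mul_descProd_of_shift (fun i hi hik => hc.chainProd_mul_of_lt hi (by omega)) (by omega)
    calc chainProd c (k + 1) ^ (m + 1)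
        = chainProd c k ^ m * (descProd c (k + 1) m * chainProd c (k + 1)) := by
          rw [pow_succ, ih (by omega), mul_assoc]
      _ = chainProd c k ^ m * (chainProd c k * (c (k + 1) * descProd c k m)) := by
          rw [← hshift, chainProd_succ, mul_assoc]
      _ = chainProd c k ^ (m + 1) * descProd c (k + 1) (m + 1) := by
          rw [descProd_succ_succ, pow_succ, mul_assoc]

theorem chainProd_pow_succ_mem_normalClosure (hc : IsBraidChain c k) :
    chainProd c k ^ (k + 1) ∈ Subgroup.normalClosure ((fun i => c i ^ 2) '' Set.Icc 1 k) := by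
  induction k with
  | zero => simp
  | succ k ih =>
    rw [pow_succ, hc.chainProd_succ_pow le_rfl, mul_assoc]
    exact mul_mem (normalClosure_sq_mono c k.le_succ (ih hc.mono))
      (descProd_mul_chainProd_mem_normalClosure c (k + 1))

end IsBraidChain

end

theorem chain_power_mem_sq_twists_general {G : Type*} [Group G] (k : ℕ) (c : ℕ → G)
    (hbraid : ∀ i, 1 ≤ i → i ≤ k - 1 → c i * c (i + 1) * c i = c (i + 1) * c i * c (i + 1))
    (hcomm : ∀ i j, 1 ≤ i → i ≤ k → 1 ≤ j → j ≤ k → i + 2 ≤ j → c i * c j = c j * c i) :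
    (((List.range' 1 k).map c).prod) ^ (k + 1) ∈
      Subgroup.closure {x : G | ∃ h : G, ∃ i, 1 ≤ i ∧ i ≤ k ∧ x = h * (c i) ^ 2 * h⁻¹} := by
  have hc : IsBraidChain c k :=
    ⟨fun i hi hik => hbraid i hi (by omega),
      fun i j hi hj hij => hcomm i j hi (by omega) (by omega) hj hij⟩
  rw [closure_conj_sq_eq_normalClosure]
  exact hc.chainProd_pow_succ_mem_normalClosure

/-- If `c₁, …, c_k` satisfy the braid and commutation relations, then
`(c₁c₂⋯c_k)^{k+1}` lies in the subgroup generated by all conjugates of the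
squares `cᵢ²`. -/
theorem chain_power_mem_sq_twists {G : Type*} [Group G] (k : ℕ) (hk : 1 ≤ k) (c : ℕ → G)
    (hbraid : ∀ i, 1 ≤ i → i ≤ k - 1 → c i * c (i + 1) * c i = c (i + 1) * c i * c (i + 1))
    (hcomm : ∀ i j, 1 ≤ i → i ≤ k → 1 ≤ j → j ≤ k → i + 2 ≤ j → c i * c j = c j * c i) :
    (((List.range' 1 k).map c).prod) ^ (k + 1) ∈
      Subgroup.closure {x : G | ∃ h : G, ∃ i, 1 ≤ i ∧ i ≤ k ∧ x = h * (c i) ^ 2 * h⁻¹} :=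
  chain_power_mem_sq_twists_general k c hbraid hcomm
end

section
/- Let G be a group and c₁, ..., c_k ∈ G satisfy the braid relations c_i c_{i+1} c_i = c_{i+1} c_i c_{i+1} and commutation c_i c_j = c_j c_i for |i-j| ≥ 2. Then (c₁c₂⋯c_k)^{k+1} = (c₁c₂⋯c_{k-1})^k · c_k² · (c_k⁻¹ c_{k-1}² c_k) · (c_k⁻¹c_{k-1}⁻¹ c_{k-2}² c_{k-1}c_k) ⋯ (c_k⁻¹c_{k-1}⁻¹⋯c₂⁻¹ c₁² c₂⋯c_{k-1}c_k). -/
/-!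
Write `Δ_k = c₁ ⋯ c_k`. The braid and commutation relations give `Δ_k c_i = c_{i+1} Δ_k` for
`1 ≤ i < k`. Hence, by induction on `j ≤ k`, `Δ_k^j = Δ_{k-1}^j · c_k c_{k-1} ⋯ c_{k-j+1}`: on
multiplying by `Δ_k = Δ_{k-1} c_k` on the right, the descending tail passes through `Δ_k` with all
its indices lowered by one. The product of conjugated squares telescopes to
`c_k ⋯ c₁ · c₁ ⋯ c_k`, and the theorem is `Δ_k^{k+1} = Δ_k^k · Δ_k`.
-/

namespace BraidChain

variable {G : Type*} [Group G] (c : ℕ → G)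

def ascProd (s n : ℕ) : G := ((List.range' s n).map c).prod

def descProd (s n : ℕ) : G := ((List.range' s n).reverse.map c).prod

def conjSq (k m : ℕ) : G := (ascProd c (m + 1) (k - m))⁻¹ * c m ^ 2 * ascProd c (m + 1) (k - m)

theorem ascProd_add (s m n : ℕ) : ascProd c s (m + n) = ascProd c s m * ascProd c (s + m) n := by
  rw [ascProd, ascProd, ascProd, ← List.range'_append_1, List.map_append, List.prod_append]

theorem ascProd_succ (s n : ℕ) : ascProd c s (n + 1) = ascProd c s n * c (s + n) := by
  rw [ascProd_add]
  simp [ascProd]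

theorem ascProd_succ' (s n : ℕ) : ascProd c s (n + 1) = c s * ascProd c (s + 1) n := by
  rw [Nat.add_comm, ascProd_add]
  simp [ascProd]

theorem descProd_succ (s n : ℕ) : descProd c s (n + 1) = c (s + n) * descProd c s n := by
  simp [descProd, List.range'_1_concat]

theorem descProd_succ' (s n : ℕ) : descProd c s (n + 1) = descProd c (s + 1) n * c s := by
  simp [descProd, List.range'_succ]

theorem commute_ascProd {i s n : ℕ} (h : ∀ j, s ≤ j → j < s + n → Commute (c i) (c j)) :
    Commute (c i) (ascProd c s n) :=
  Commute.list_prod_right _ _ fun _ hx => by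
    obtain ⟨j, hj, rfl⟩ := List.mem_map.1 hx
    rw [List.mem_range'_1] at hj
    exact h j hj.1 hj.2

theorem prod_map_conjSq {k n : ℕ} (hn : n ≤ k) :
    ((List.range n).map fun t => conjSq c k (k - t)).prod =
      descProd c (k - n + 1) n * ascProd c (k - n + 1) n := by
  induction n with
  | zero => simp [descProd, ascProd]
  | succ n ih =>
    obtain ⟨m, rfl⟩ : ∃ m, k = m + n + 1 := ⟨k - n - 1, by omega⟩
    have hm : m + n + 1 - n = m + 1 := by omega
    have hm' : m + n + 1 - (n + 1) + 1 = m + 1 := by omega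
    rw [List.range_succ, List.map_append, List.prod_append, ih (by omega), hm, hm',
      List.map_singleton, List.prod_singleton, conjSq, hm, show m + n + 1 - (m + 1) = n by omega,
      descProd_succ', ascProd_succ', sq]
    group

variable {k : ℕ}
  (hbraid : ∀ i, 1 ≤ i → i ≤ k - 1 → c i * c (i + 1) * c i = c (i + 1) * c i * c (i + 1))
  (hcomm : ∀ i j, 1 ≤ i → i ≤ k → 1 ≤ j → j ≤ k → i + 2 ≤ j → c i * c j = c j * c i)
include hbraid hcomm

theorem ascProd_mul_eq_mul_ascProd {i : ℕ} (hi : 1 ≤ i) (hik : i < k) :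
    ascProd c 1 k * c i = c (i + 1) * ascProd c 1 k := by
  obtain ⟨b, rfl⟩ : ∃ b, k = i + 1 + b := ⟨k - i - 1, by omega⟩
  have hsplit : ascProd c 1 (i + 1 + b) =
      ascProd c 1 (i - 1) * (c i * (c (i + 1) * ascProd c (i + 2) b)) := by
    rw [show i + 1 + b = (i - 1) + (b + 1 + 1) by omega, ascProd_add, ascProd_succ', ascProd_succ',
      show 1 + (i - 1) = i by omega]
  have hi_tail : Commute (c i) (ascProd c (i + 2) b) :=
    commute_ascProd c fun j hj hj' => hcomm i j hi (by omega) (by omega) (by omega) hj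
  have hi_head : Commute (c (i + 1)) (ascProd c 1 (i - 1)) :=
    commute_ascProd c fun j hj hj' =>
      (hcomm j (i + 1) hj (by omega) (by omega) (by omega) (by omega)).symm
  calc ascProd c 1 (i + 1 + b) * c i
      = ascProd c 1 (i - 1) * ((c i * c (i + 1) * c i) * ascProd c (i + 2) b) := by
        rw [hsplit]; simp only [mul_assoc, ← hi_tail.eq]
    _ = ascProd c 1 (i - 1) * ((c (i + 1) * c i * c (i + 1)) * ascProd c (i + 2) b) := by
        rw [hbraid i hi (by omega)]
    _ = c (i + 1) * ascProd c 1 (i + 1 + b) := by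
        rw [hsplit]; simp only [mul_assoc, hi_head.left_comm]

theorem descProd_mul_ascProd {s n : ℕ} (hs : 1 ≤ s) (hsn : s + n ≤ k) :
    descProd c (s + 1) n * ascProd c 1 k = ascProd c 1 k * descProd c s n := by
  induction n with
  | zero => simp [descProd]
  | succ n ih =>
    rw [descProd_succ, mul_assoc, ih (by omega), ← mul_assoc,
      show s + 1 + n = s + n + 1 by omega,
      ← ascProd_mul_eq_mul_ascProd c hbraid hcomm (by omega) (by omega), mul_assoc,
      ← descProd_succ]

theorem ascProd_pow {j : ℕ} (hj : j ≤ k) :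
    ascProd c 1 k ^ j = ascProd c 1 (k - 1) ^ j * descProd c (k - j + 1) j := by
  induction j with
  | zero => simp [descProd]
  | succ j ih =>
    obtain ⟨m, rfl⟩ : ∃ m, k = m + j + 1 := ⟨k - j - 1, by omega⟩
    have hΔ : ascProd c 1 (m + j + 1) = ascProd c 1 (m + j) * c (m + j + 1) := by
      rw [ascProd_succ, Nat.add_comm 1]
    calc ascProd c 1 (m + j + 1) ^ (j + 1)
        = ascProd c 1 (m + j) ^ j * (descProd c (m + 1 + 1) j * ascProd c 1 (m + j + 1)) := by
          rw [pow_succ, ih (by omega), show m + j + 1 - j = m + 1 by omega,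
            show m + j + 1 - 1 = m + j by omega, mul_assoc]
      _ = ascProd c 1 (m + j) ^ (j + 1) * (c (m + 1 + j) * descProd c (m + 1) j) := by
          rw [descProd_mul_ascProd c hbraid hcomm (by omega) (by omega), hΔ,
            show m + j + 1 = m + 1 + j by omega]
          group
      _ = _ := by
          rw [← descProd_succ, show m + j + 1 - 1 = m + j by omega,
            show m + j + 1 - (j + 1) + 1 = m + 1 by omega]

end BraidChain

open BraidChain in
theorem chain_power_eq_prod_of_conj_squares_general {G : Type*} [Group G] (k : ℕ)
    (c : ℕ → G)
    (hbraid : ∀ i, 1 ≤ i → i ≤ k - 1 → c i * c (i + 1) * c i = c (i + 1) * c i * c (i + 1))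
    (hcomm : ∀ i j, 1 ≤ i → i ≤ k → 1 ≤ j → j ≤ k → i + 2 ≤ j → c i * c j = c j * c i) :
    (((List.range' 1 k).map c).prod) ^ (k + 1) =
      (((List.range' 1 (k - 1)).map c).prod) ^ k *
        (((List.range k).map (fun t =>
          let m := k - t
          (((List.range' (m + 1) (k - m)).map c).prod)⁻¹ * (c m) ^ 2 *
            (((List.range' (m + 1) (k - m)).map c).prod))).prod) := by
  change ascProd c 1 k ^ (k + 1) =
    ascProd c 1 (k - 1) ^ k * ((List.range k).map fun t => conjSq c k (k - t)).prod
  rw [prod_map_conjSq c le_rfl, pow_succ, ascProd_pow c hbraid hcomm le_rfl, Nat.sub_self,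
    mul_assoc]

/-- If `c₁, …, c_k` satisfy the braid and commutation relations, then
`(c₁⋯c_k)^{k+1} = (c₁⋯c_{k-1})^k · c_k² · (c_k⁻¹ c_{k-1}² c_k) ⋯
(c_k⁻¹⋯c₂⁻¹ c₁² c₂⋯c_k)`. -/
theorem chain_power_eq_prod_of_conj_squares {G : Type*} [Group G] (k : ℕ) (hk : 2 ≤ k)
    (c : ℕ → G)
    (hbraid : ∀ i, 1 ≤ i → i ≤ k - 1 → c i * c (i + 1) * c i = c (i + 1) * c i * c (i + 1))
    (hcomm : ∀ i j, 1 ≤ i → i ≤ k → 1 ≤ j → j ≤ k → i + 2 ≤ j → c i * c j = c j * c i) :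
    (((List.range' 1 k).map c).prod) ^ (k + 1) =
      (((List.range' 1 (k - 1)).map c).prod) ^ k *
        (((List.range k).map (fun t =>
          let m := k - t
          (((List.range' (m + 1) (k - m)).map c).prod)⁻¹ * (c m) ^ 2 *
            (((List.range' (m + 1) (k - m)).map c).prod))).prod) :=
  chain_power_eq_prod_of_conj_squares_general k c hbraid hcomm
end

section
/- Let φ: G → Q be a surjective group homomorphism with kernel K, and let T ⊆ G be a set of coset representatives (a transversal) containing the identity, with the map q ↦ t_q ∈ T a section of φ. Then K is generated by the elements t x (t̄x)⁻¹, where t ranges over T, x ranges over a generating set X of G together with inverses of elements of X, and t̄x denotes the representative in T of the coset of tx. -/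
/-!
The image of a section `σ` of `φ` is a right transversal of `ker φ` whose representative map is
`g ↦ σ (φ g)`, so the theorem is Schreier's lemma `Subgroup.closure_mul_image_eq` for this
transversal and the generating set `X ∪ X⁻¹`.
-/

namespace MonoidHom

variable {G Q : Type*} [Group G] [Group Q] {φ : G →* Q} {σ : Q → G}

theorem isComplement_ker_range (hσ : Function.RightInverse σ φ) :
    Subgroup.IsComplement (φ.ker : Set G) (Set.range σ) := by
  refine Subgroup.isComplement_iff_existsUnique_mul_inv_mem.mpr fun g =>
    ⟨⟨σ (φ g), φ g, rfl⟩, by simp [hσ (φ g)], ?_⟩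
  rintro ⟨-, q, rfl⟩ hq
  have hφg : φ g = q := by simpa [hσ q, mul_inv_eq_one] using hq
  simp [hφg]

theorem coe_toRightFun_isComplement_ker_range (hσ : Function.RightInverse σ φ) (g : G) :
    ((isComplement_ker_range hσ).toRightFun g : G) = σ (φ g) :=
  congrArg Subtype.val <|
    (Subgroup.isComplement_iff_existsUnique_mul_inv_mem.mp (isComplement_ker_range hσ) g).unique
      ((isComplement_ker_range hσ).mul_inv_toRightFun_mem g) (y₂ := ⟨σ (φ g), φ g, rfl⟩)
      (by simp [hσ (φ g)])

end MonoidHom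

theorem reidemeister_schreier_generators_general {G Q : Type*} [Group G] [Group Q]
    (φ : G →* Q)
    (X : Set G) (hX : Subgroup.closure X = ⊤)
    (σ : Q → G) (hσ : ∀ q, φ (σ q) = q) (hσ1 : σ 1 = 1) :
    φ.ker = Subgroup.closure
      {k : G | ∃ q : Q, ∃ x : G, (x ∈ X ∨ x⁻¹ ∈ X) ∧
        k = σ q * x * (σ (φ (σ q * x)))⁻¹} := by
  have hXX : Subgroup.closure (X ∪ X⁻¹) = ⊤ := by
    rw [Subgroup.closure_union, Subgroup.closure_inv, sup_idem, hX]
  rw [← Subgroup.closure_mul_image_eq (φ.isComplement_ker_range hσ) ⟨1, hσ1⟩ hXX]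
  simp only [MonoidHom.coe_toRightFun_isComplement_ker_range hσ]
  congr 1
  ext k
  constructor
  · rintro ⟨_, ⟨_, ⟨q, rfl⟩, x, hx, rfl⟩, rfl⟩
    exact ⟨q, x, hx, rfl⟩
  · rintro ⟨q, x, hx, rfl⟩
    exact ⟨_, ⟨_, ⟨q, rfl⟩, x, hx, rfl⟩, rfl⟩

/-- Reidemeister–Schreier generating set: if `φ : G → Q` is a surjective homomorphism
with kernel `K`, `X` generates `G`, and `σ : Q → G` is a section of `φ` (a choice of
transversal) with `σ 1 = 1`, then `K` is generated by the elements
`t x (overline{t x})⁻¹` for `t` in the transversal and `x ∈ X ∪ X⁻¹`, where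
`overline{h} = σ (φ h)`. -/
theorem reidemeister_schreier_generators {G Q : Type*} [Group G] [Group Q]
    (φ : G →* Q) (hφ : Function.Surjective φ)
    (X : Set G) (hX : Subgroup.closure X = ⊤)
    (σ : Q → G) (hσ : ∀ q, φ (σ q) = q) (hσ1 : σ 1 = 1) :
    φ.ker = Subgroup.closure
      {k : G | ∃ q : Q, ∃ x : G, (x ∈ X ∨ x⁻¹ ∈ X) ∧
        k = σ q * x * (σ (φ (σ q * x)))⁻¹} :=
  reidemeister_schreier_generators_general φ X hX σ hσ hσ1
end

section
/- Let G be the group with presentation on generators Y_{i,j} for 1 ≤ i,j ≤ g with i ≠ j (g ≥ 3), with relators: (1) Y_{i,j}²; (2) (Y_{i,j}Y_{k,j})², (Y_{i,j}Y_{k,l})²; (3) (Y_{i,j}Y_{i,k}Y_{j,k})², (Y_{i,j}Y_{i,k}Y_{i,l})²; (4) (Y_{j,i}Y_{i,j}Y_{k,j}Y_{j,k}Y_{i,k}Y_{k,i})²; (5) the relators expressing Y_{g,i} in terms of the others for 1 ≤ i ≤ g-1. Let N be the normal subgroup normally generated by all Y_{j,i}⁻¹Y_{i,j}. Then in the quotient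 G/N, for all 1 ≤ i < j ≤ g, the images of Y_{i,j} and Y_{j,i} are equal, all generators have order dividing 2, and any two generators commute; hence G/N is an elementary abelian 2-group. -/
/-!
In `G/N` the generators satisfy `Y i j = Y j i` and have order dividing `2`, so relator (2)
says that two generators commute whenever their index pairs are disjoint, or share an index
`j` with the other two indices different from `g`. The one missing case, `Y i g` against
`Y i m`, comes from relator (5): in `G/N` it reads `∏_{k ≠ m} Y k m * Y k g = 1`, and `Y i m`
commutes with every factor except the one for `k = i`, namely `Y i m * Y i g`; hence it
commutes with that factor as well. A group generated by pairwise commuting involutions is an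
elementary abelian `2`-group.
-/

theorem Commute.of_sq_eq_one {Q : Type*} [Group Q] {a b : Q} (ha : a ^ 2 = 1) (hb : b ^ 2 = 1)
    (hab : (a * b) ^ 2 = 1) : Commute a b := by
  have inv_self : ∀ x : Q, x ^ 2 = 1 → x⁻¹ = x :=
    fun x hx => inv_eq_of_mul_eq_one_right (by rwa [← sq])
  calc a * b = (a * b)⁻¹ := (inv_self _ hab).symm
    _ = b⁻¹ * a⁻¹ := mul_inv_rev a b
    _ = b * a := by rw [inv_self a ha, inv_self b hb]

theorem Commute.of_list_prod_append_cons {Q : Type*} [Group Q] {x c : Q} {l₁ l₂ : List Q}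
    (h : Commute x (l₁ ++ c :: l₂).prod) (h₁ : ∀ a ∈ l₁, Commute x a)
    (h₂ : ∀ a ∈ l₂, Commute x a) : Commute x c := by
  rw [List.prod_append, List.prod_cons] at h
  have hc : c = l₁.prod⁻¹ * (l₁.prod * (c * l₂.prod)) * l₂.prod⁻¹ := by group
  rw [hc]
  exact ((Commute.list_prod_right _ _ h₁).inv_right.mul_right h).mul_right
    (Commute.list_prod_right _ _ h₂).inv_right

theorem Subgroup.commute_of_closure_eq_top {Q : Type*} [Group Q] {S : Set Q}
    (hS : Subgroup.closure S = ⊤) (hcomm : ∀ a ∈ S, ∀ b ∈ S, Commute a b) (x y : Q) :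
    Commute x y := by
  have hle : Subgroup.closure S ≤ Subgroup.centralizer S :=
    (Subgroup.closure_le _).mpr fun a ha b hb => (hcomm b hb a ha).eq
  have hx : x ∈ Subgroup.centralizer (Subgroup.closure S) := by
    rw [Subgroup.centralizer_closure]
    exact hle (hS ▸ Subgroup.mem_top x)
  exact (Subgroup.mem_centralizer_iff.mp hx y (hS ▸ Subgroup.mem_top y)).symm

theorem Subgroup.sq_eq_one_of_closure_eq_top {Q : Type*} [Group Q] {S : Set Q}
    (hS : Subgroup.closure S = ⊤) (hcomm : ∀ x y : Q, Commute x y) (hsq : ∀ a ∈ S, a ^ 2 = 1)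
    (x : Q) : x ^ 2 = 1 := by
  induction hS ▸ Subgroup.mem_top x using Subgroup.closure_induction with
  | mem a ha => exact hsq a ha
  | one => exact one_pow 2
  | mul a b _ _ ha hb => rw [(hcomm a b).mul_pow, ha, hb, one_mul]
  | inv a _ ha => rw [inv_pow, ha, inv_one]

section Generators

variable {G Q : Type*} [Group G] [Group Q] {g : ℕ} {Y : ℕ → ℕ → G} (φ : G →* Q)

theorem map_generator_sq_eq_one
    (hsymm : ∀ i j, 1 ≤ i → i ≤ g → 1 ≤ j → j ≤ g → i ≠ j → φ (Y i j) = φ (Y j i))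
    (h1 : ∀ i j, 1 ≤ i → i ≤ g - 1 → 1 ≤ j → j ≤ g → i ≠ j → (Y i j) ^ 2 = 1)
    {i j : ℕ} (hi₁ : 1 ≤ i) (hi₂ : i ≤ g) (hj₁ : 1 ≤ j) (hj₂ : j ≤ g) (hij : i ≠ j) :
    φ (Y i j) ^ 2 = 1 := by
  by_cases hig : i ≤ g - 1
  · rw [← map_pow, h1 i j hi₁ hig hj₁ hj₂ hij, map_one]
  · rw [hsymm i j hi₁ hi₂ hj₁ hj₂ hij, ← map_pow, h1 j i hj₁ (by omega) hi₁ hi₂ hij.symm,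
      map_one]

theorem commute_map_generator_of_disjoint
    (hsymm : ∀ i j, 1 ≤ i → i ≤ g → 1 ≤ j → j ≤ g → i ≠ j → φ (Y i j) = φ (Y j i))
    (h1 : ∀ i j, 1 ≤ i → i ≤ g - 1 → 1 ≤ j → j ≤ g → i ≠ j → (Y i j) ^ 2 = 1)
    (h2b : ∀ i j k l, 1 ≤ i → i ≤ g - 1 → 1 ≤ j → j ≤ g → 1 ≤ k → k ≤ g - 1 → 1 ≤ l → l ≤ g →
      i ≠ j → i ≠ k → i ≠ l → j ≠ k → j ≠ l → k ≠ l → (Y i j * Y k l) ^ 2 = 1)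
    {i j k l : ℕ} (hi₁ : 1 ≤ i) (hi₂ : i ≤ g) (hj₁ : 1 ≤ j) (hj₂ : j ≤ g) (hk₁ : 1 ≤ k)
    (hk₂ : k ≤ g) (hl₁ : 1 ≤ l) (hl₂ : l ≤ g) (hij : i ≠ j) (hik : i ≠ k) (hil : i ≠ l)
    (hjk : j ≠ k) (hjl : j ≠ l) (hkl : k ≠ l) :
    Commute (φ (Y i j)) (φ (Y k l)) := by
  have of_h2b : ∀ i j k l, 1 ≤ i → i ≤ g - 1 → 1 ≤ j → j ≤ g → 1 ≤ k → k ≤ g - 1 → 1 ≤ l →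
      l ≤ g → i ≠ j → i ≠ k → i ≠ l → j ≠ k → j ≠ l → k ≠ l →
      Commute (φ (Y i j)) (φ (Y k l)) :=
    fun i j k l hi₁ hi₂ hj₁ hj₂ hk₁ hk₂ hl₁ hl₂ hij hik hil hjk hjl hkl =>
      .of_sq_eq_one (map_generator_sq_eq_one φ hsymm h1 hi₁ (by omega) hj₁ hj₂ hij)
        (map_generator_sq_eq_one φ hsymm h1 hk₁ (by omega) hl₁ hl₂ hkl)
        (by rw [← map_mul, ← map_pow,
          h2b i j k l hi₁ hi₂ hj₁ hj₂ hk₁ hk₂ hl₁ hl₂ hij hik hil hjk hjl hkl, map_one])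
  -- At most one of the four indices is `g`; orient both pairs so that it comes second.
  by_cases hig : i = g
  · rw [hsymm i j hi₁ hi₂ hj₁ hj₂ hij]
    exact of_h2b j i k l hj₁ (by omega) hi₁ hi₂ hk₁ (by omega) hl₁ hl₂ hij.symm hjk hjl
      hik hil hkl
  by_cases hkg : k = g
  · rw [hsymm k l hk₁ hk₂ hl₁ hl₂ hkl]
    exact of_h2b i j l k hi₁ (by omega) hj₁ hj₂ hl₁ (by omega) hk₁ hk₂ hij hil hik hjl hjk
      hkl.symm
  exact of_h2b i j k l hi₁ (by omega) hj₁ hj₂ hk₁ (by omega) hl₁ hl₂ hij hik hil hjk hjl hkl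

theorem map_lantern_prod_eq_one
    (hsymm : ∀ i j, 1 ≤ i → i ≤ g → 1 ≤ j → j ≤ g → i ≠ j → φ (Y i j) = φ (Y j i))
    (h5 : ∀ i, 1 ≤ i → i ≤ g - 1 →
      ((((List.range' 1 (g - 1)).filter (fun k => k ≠ i)).map
        (fun k => Y k i * Y k g)).prod) * Y i g = Y g i)
    {m : ℕ} (hm₁ : 1 ≤ m) (hm₂ : m ≤ g - 1) :
    (((List.range' 1 (g - 1)).filter (fun k => k ≠ m)).map
      (fun k => φ (Y k m) * φ (Y k g))).prod = 1 := by
  have h := congrArg φ (h5 m hm₁ hm₂)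
  rw [map_mul, map_list_prod, List.map_map, ← hsymm m g hm₁ (by omega) (by omega) le_rfl
    (by omega)] at h
  simpa [Function.comp_def] using h

theorem commute_map_generator_top
    (hsymm : ∀ i j, 1 ≤ i → i ≤ g → 1 ≤ j → j ≤ g → i ≠ j → φ (Y i j) = φ (Y j i))
    (h1 : ∀ i j, 1 ≤ i → i ≤ g - 1 → 1 ≤ j → j ≤ g → i ≠ j → (Y i j) ^ 2 = 1)
    (h2a : ∀ i j k, 1 ≤ i → i ≤ g - 1 → 1 ≤ j → j ≤ g → 1 ≤ k → k ≤ g - 1 →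
      i ≠ j → i ≠ k → j ≠ k → (Y i j * Y k j) ^ 2 = 1)
    (h2b : ∀ i j k l, 1 ≤ i → i ≤ g - 1 → 1 ≤ j → j ≤ g → 1 ≤ k → k ≤ g - 1 → 1 ≤ l → l ≤ g →
      i ≠ j → i ≠ k → i ≠ l → j ≠ k → j ≠ l → k ≠ l → (Y i j * Y k l) ^ 2 = 1)
    (h5 : ∀ i, 1 ≤ i → i ≤ g - 1 →
      ((((List.range' 1 (g - 1)).filter (fun k => k ≠ i)).map
        (fun k => Y k i * Y k g)).prod) * Y i g = Y g i)
    {i m : ℕ} (hi₁ : 1 ≤ i) (hi₂ : i ≤ g - 1) (hm₁ : 1 ≤ m) (hm₂ : m ≤ g - 1) (him : i ≠ m) :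
    Commute (φ (Y i m)) (φ (Y i g)) := by
  set L := (List.range' 1 (g - 1)).filter (fun k => k ≠ m)
  have hmemL : ∀ {k}, k ∈ L ↔ 1 ≤ k ∧ k ≤ g - 1 ∧ k ≠ m := by
    intro k
    simp only [L, List.mem_filter, List.mem_range'_1, decide_eq_true_eq]
    omega
  obtain ⟨l₁, l₂, hL⟩ := List.append_of_mem (hmemL.mpr ⟨hi₁, hi₂, him⟩)
  have hi_notMem : i ∉ l₁ ++ l₂ :=
    (List.nodup_cons.mp (List.nodup_middle.mp
      (hL ▸ List.Nodup.filter _ List.nodup_range'))).1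
  have hfactor : ∀ k ∈ l₁ ++ l₂, Commute (φ (Y i m)) (φ (Y k m) * φ (Y k g)) := by
    intro k hk
    obtain ⟨hk₁, hk₂, hkm⟩ := hmemL.mp (by
      rw [hL]; simp only [List.mem_append, List.mem_cons] at hk ⊢; tauto)
    have hki : k ≠ i := fun h => hi_notMem (h ▸ hk)
    refine .mul_right (.of_sq_eq_one ?_ ?_ ?_) ?_
    · exact map_generator_sq_eq_one φ hsymm h1 hi₁ (by omega) hm₁ (by omega) him
    · exact map_generator_sq_eq_one φ hsymm h1 hk₁ (by omega) hm₁ (by omega) hkm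
    · rw [← map_mul, ← map_pow, h2a i m k hi₁ hi₂ hm₁ (by omega) hk₁ hk₂ him hki.symm
        hkm.symm, map_one]
    · exact commute_map_generator_of_disjoint φ hsymm h1 h2b hi₁ (by omega) hm₁ (by omega)
        hk₁ (by omega) (by omega) le_rfl him hki.symm (by omega) hkm.symm (by omega) (by omega)
  have hprod : (L.map fun k => φ (Y k m) * φ (Y k g)).prod = 1 :=
    map_lantern_prod_eq_one φ hsymm h5 hm₁ hm₂
  rw [hL, List.map_append, List.map_cons] at hprod
  have hmiddle : Commute (φ (Y i m)) (φ (Y i m) * φ (Y i g)) :=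
    .of_list_prod_append_cons (hprod ▸ Commute.one_right _)
      (by simpa using fun k hk => hfactor k (List.mem_append_left _ hk))
      (by simpa using fun k hk => hfactor k (List.mem_append_right _ hk))
  simpa using (Commute.refl (φ (Y i m))).inv_right.mul_right hmiddle

theorem commute_map_generator_of_common_index
    (hsymm : ∀ i j, 1 ≤ i → i ≤ g → 1 ≤ j → j ≤ g → i ≠ j → φ (Y i j) = φ (Y j i))
    (h1 : ∀ i j, 1 ≤ i → i ≤ g - 1 → 1 ≤ j → j ≤ g → i ≠ j → (Y i j) ^ 2 = 1)
    (h2a : ∀ i j k, 1 ≤ i → i ≤ g - 1 → 1 ≤ j → j ≤ g → 1 ≤ k → k ≤ g - 1 →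
      i ≠ j → i ≠ k → j ≠ k → (Y i j * Y k j) ^ 2 = 1)
    (h2b : ∀ i j k l, 1 ≤ i → i ≤ g - 1 → 1 ≤ j → j ≤ g → 1 ≤ k → k ≤ g - 1 → 1 ≤ l → l ≤ g →
      i ≠ j → i ≠ k → i ≠ l → j ≠ k → j ≠ l → k ≠ l → (Y i j * Y k l) ^ 2 = 1)
    (h5 : ∀ i, 1 ≤ i → i ≤ g - 1 →
      ((((List.range' 1 (g - 1)).filter (fun k => k ≠ i)).map
        (fun k => Y k i * Y k g)).prod) * Y i g = Y g i)
    {a b c : ℕ} (ha₁ : 1 ≤ a) (ha₂ : a ≤ g) (hb₁ : 1 ≤ b) (hb₂ : b ≤ g) (hc₁ : 1 ≤ c)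
    (hc₂ : c ≤ g) (hba : b ≠ a) (hca : c ≠ a) :
    Commute (φ (Y b a)) (φ (Y c a)) := by
  rcases eq_or_ne b c with rfl | hbc
  · exact .refl _
  by_cases hbg : b = g
  · subst hbg
    rw [hsymm b a hb₁ hb₂ ha₁ ha₂ hba, hsymm c a hc₁ hc₂ ha₁ ha₂ hca]
    exact (commute_map_generator_top φ hsymm h1 h2a h2b h5 ha₁ (by omega) hc₁ (by omega)
      hca.symm).symm
  by_cases hcg : c = g
  · subst hcg
    rw [hsymm b a hb₁ hb₂ ha₁ ha₂ hba, hsymm c a hc₁ hc₂ ha₁ ha₂ hca]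
    exact commute_map_generator_top φ hsymm h1 h2a h2b h5 ha₁ (by omega) hb₁ (by omega)
      hba.symm
  refine .of_sq_eq_one (map_generator_sq_eq_one φ hsymm h1 hb₁ hb₂ ha₁ ha₂ hba)
    (map_generator_sq_eq_one φ hsymm h1 hc₁ hc₂ ha₁ ha₂ hca) ?_
  rw [← map_mul, ← map_pow, h2a b a c hb₁ (by omega) ha₁ ha₂ hc₁ (by omega) hba hbc hca.symm,
    map_one]

theorem commute_map_generator
    (hsymm : ∀ i j, 1 ≤ i → i ≤ g → 1 ≤ j → j ≤ g → i ≠ j → φ (Y i j) = φ (Y j i))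
    (h1 : ∀ i j, 1 ≤ i → i ≤ g - 1 → 1 ≤ j → j ≤ g → i ≠ j → (Y i j) ^ 2 = 1)
    (h2a : ∀ i j k, 1 ≤ i → i ≤ g - 1 → 1 ≤ j → j ≤ g → 1 ≤ k → k ≤ g - 1 →
      i ≠ j → i ≠ k → j ≠ k → (Y i j * Y k j) ^ 2 = 1)
    (h2b : ∀ i j k l, 1 ≤ i → i ≤ g - 1 → 1 ≤ j → j ≤ g → 1 ≤ k → k ≤ g - 1 → 1 ≤ l → l ≤ g →
      i ≠ j → i ≠ k → i ≠ l → j ≠ k → j ≠ l → k ≠ l → (Y i j * Y k l) ^ 2 = 1)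
    (h5 : ∀ i, 1 ≤ i → i ≤ g - 1 →
      ((((List.range' 1 (g - 1)).filter (fun k => k ≠ i)).map
        (fun k => Y k i * Y k g)).prod) * Y i g = Y g i)
    {i j k l : ℕ} (hi₁ : 1 ≤ i) (hi₂ : i ≤ g) (hj₁ : 1 ≤ j) (hj₂ : j ≤ g) (hk₁ : 1 ≤ k)
    (hk₂ : k ≤ g) (hl₁ : 1 ≤ l) (hl₂ : l ≤ g) (hij : i ≠ j) (hkl : k ≠ l) :
    Commute (φ (Y i j)) (φ (Y k l)) := by
  have common := @commute_map_generator_of_common_index _ _ _ _ _ _ φ hsymm h1 h2a h2b h5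
  rcases eq_or_ne i k with rfl | hik
  · rw [hsymm i j hi₁ hi₂ hj₁ hj₂ hij, hsymm i l hi₁ hi₂ hl₁ hl₂ hkl]
    exact common hi₁ hi₂ hj₁ hj₂ hl₁ hl₂ hij.symm hkl.symm
  rcases eq_or_ne i l with rfl | hil
  · rw [hsymm i j hi₁ hi₂ hj₁ hj₂ hij]
    exact common hi₁ hi₂ hj₁ hj₂ hk₁ hk₂ hij.symm hkl
  rcases eq_or_ne j k with rfl | hjk
  · rw [hsymm j l hj₁ hj₂ hl₁ hl₂ hkl]
    exact common hj₁ hj₂ hi₁ hi₂ hl₁ hl₂ hij hkl.symm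
  rcases eq_or_ne j l with rfl | hjl
  · exact common hj₁ hj₂ hi₁ hi₂ hk₁ hk₂ hij hkl
  exact commute_map_generator_of_disjoint φ hsymm h1 h2b hi₁ hi₂ hj₁ hj₂ hk₁ hk₂ hl₁ hl₂ hij
    hik hil hjk hjl hkl

end Generators

theorem quotient_by_N_elementary_abelian_general {G : Type*} [Group G] (g : ℕ)
    (Y : ℕ → ℕ → G)
    (hgen : Subgroup.closure {x : G | ∃ i j, 1 ≤ i ∧ i ≤ g ∧ 1 ≤ j ∧ j ≤ g ∧ i ≠ j ∧
      x = Y i j} = ⊤)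
    (h1 : ∀ i j, 1 ≤ i → i ≤ g - 1 → 1 ≤ j → j ≤ g → i ≠ j → (Y i j) ^ 2 = 1)
    (h2a : ∀ i j k, 1 ≤ i → i ≤ g - 1 → 1 ≤ j → j ≤ g → 1 ≤ k → k ≤ g - 1 →
      i ≠ j → i ≠ k → j ≠ k → (Y i j * Y k j) ^ 2 = 1)
    (h2b : ∀ i j k l, 1 ≤ i → i ≤ g - 1 → 1 ≤ j → j ≤ g → 1 ≤ k → k ≤ g - 1 → 1 ≤ l → l ≤ g →
      i ≠ j → i ≠ k → i ≠ l → j ≠ k → j ≠ l → k ≠ l → (Y i j * Y k l) ^ 2 = 1)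
    (h5 : ∀ i, 1 ≤ i → i ≤ g - 1 →
      ((((List.range' 1 (g - 1)).filter (fun k => k ≠ i)).map
        (fun k => Y k i * Y k g)).prod) * Y i g = Y g i)
    (N : Subgroup G)
    (hN : N = Subgroup.normalClosure
      {x : G | ∃ i j, 1 ≤ i ∧ i ≤ g ∧ 1 ≤ j ∧ j ≤ g ∧ i ≠ j ∧ x = (Y j i)⁻¹ * Y i j})
    [N.Normal] :
    (∀ i j, 1 ≤ i → i < j → j ≤ g →
      (QuotientGroup.mk' N) (Y i j) = (QuotientGroup.mk' N) (Y j i)) ∧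
    (∀ i j, 1 ≤ i → i ≤ g → 1 ≤ j → j ≤ g → i ≠ j →
      ((QuotientGroup.mk' N) (Y i j)) ^ 2 = 1) ∧
    (∀ i j k l, 1 ≤ i → i ≤ g → 1 ≤ j → j ≤ g → 1 ≤ k → k ≤ g → 1 ≤ l → l ≤ g →
      i ≠ j → k ≠ l →
      (QuotientGroup.mk' N) (Y i j) * (QuotientGroup.mk' N) (Y k l) =
        (QuotientGroup.mk' N) (Y k l) * (QuotientGroup.mk' N) (Y i j)) ∧
    ((∀ x : G ⧸ N, x ^ 2 = 1) ∧ ∀ x y : G ⧸ N, x * y = y * x) := by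
  set φ := QuotientGroup.mk' N
  have hsymm : ∀ i j, 1 ≤ i → i ≤ g → 1 ≤ j → j ≤ g → i ≠ j → φ (Y i j) = φ (Y j i) :=
    fun i j hi₁ hi₂ hj₁ hj₂ hij => (QuotientGroup.eq.mpr (hN ▸
      Subgroup.subset_normalClosure ⟨i, j, hi₁, hi₂, hj₁, hj₂, hij, rfl⟩)).symm
  have hsq := @map_generator_sq_eq_one _ _ _ _ _ _ φ hsymm h1
  have hcomm := @commute_map_generator _ _ _ _ _ _ φ hsymm h1 h2a h2b h5
  have hgenQ : Subgroup.closure (φ '' {x : G | ∃ i j, 1 ≤ i ∧ i ≤ g ∧ 1 ≤ j ∧ j ≤ g ∧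
      i ≠ j ∧ x = Y i j}) = ⊤ := by
    rw [← MonoidHom.map_closure, hgen]
    exact Subgroup.map_top_of_surjective φ (QuotientGroup.mk'_surjective N)
  have hcommQ : ∀ x y : G ⧸ N, Commute x y := by
    refine Subgroup.commute_of_closure_eq_top hgenQ ?_
    rintro _ ⟨_, ⟨i, j, hi₁, hi₂, hj₁, hj₂, hij, rfl⟩, rfl⟩
      _ ⟨_, ⟨k, l, hk₁, hk₂, hl₁, hl₂, hkl, rfl⟩, rfl⟩
    exact hcomm hi₁ hi₂ hj₁ hj₂ hk₁ hk₂ hl₁ hl₂ hij hkl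
  refine ⟨fun i j hi hij hj => hsymm i j hi (by omega) (by omega) hj hij.ne, fun _ _ => hsq,
    fun i j k l hi₁ hi₂ hj₁ hj₂ hk₁ hk₂ hl₁ hl₂ hij hkl =>
      (hcomm hi₁ hi₂ hj₁ hj₂ hk₁ hk₂ hl₁ hl₂ hij hkl).eq,
    Subgroup.sq_eq_one_of_closure_eq_top hgenQ hcommQ ?_, fun x y => (hcommQ x y).eq⟩
  rintro _ ⟨_, ⟨i, j, hi₁, hi₂, hj₁, hj₂, hij, rfl⟩, rfl⟩
  exact hsq hi₁ hi₂ hj₁ hj₂ hij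

/-- Let `G` be a group generated by elements `Y i j` (`1 ≤ i, j ≤ g`, `i ≠ j`)
subject to the relators (1)–(5) of the presentation of `Γ₂(g-1)` (with the extra
generators `Y_{g,i}`), and let `N` be the normal closure of all `Y_{j,i}⁻¹ Y_{i,j}`.
Then in `G/N` the images of `Y_{i,j}` and `Y_{j,i}` coincide, all generators have
order dividing `2` and any two generators commute; moreover `G/N` is an elementary
abelian `2`-group (every element squares to `1` and any two elements commute). -/
theorem quotient_by_N_elementary_abelian {G : Type*} [Group G] (g : ℕ) (hg : 3 ≤ g)
    (Y : ℕ → ℕ → G)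
    (hgen : Subgroup.closure {x : G | ∃ i j, 1 ≤ i ∧ i ≤ g ∧ 1 ≤ j ∧ j ≤ g ∧ i ≠ j ∧
      x = Y i j} = ⊤)
    (h1 : ∀ i j, 1 ≤ i → i ≤ g - 1 → 1 ≤ j → j ≤ g → i ≠ j → (Y i j) ^ 2 = 1)
    (h2a : ∀ i j k, 1 ≤ i → i ≤ g - 1 → 1 ≤ j → j ≤ g → 1 ≤ k → k ≤ g - 1 →
      i ≠ j → i ≠ k → j ≠ k → (Y i j * Y k j) ^ 2 = 1)
    (h2b : ∀ i j k l, 1 ≤ i → i ≤ g - 1 → 1 ≤ j → j ≤ g → 1 ≤ k → k ≤ g - 1 → 1 ≤ l → l ≤ g →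
      i ≠ j → i ≠ k → i ≠ l → j ≠ k → j ≠ l → k ≠ l → (Y i j * Y k l) ^ 2 = 1)
    (h3a : ∀ i j k, 1 ≤ i → i ≤ g - 1 → 1 ≤ j → j ≤ g - 1 → 1 ≤ k → k ≤ g →
      i ≠ j → i ≠ k → j ≠ k → (Y i j * Y i k * Y j k) ^ 2 = 1)
    (h3b : ∀ i j k l, 1 ≤ i → i ≤ g - 1 → 1 ≤ j → j ≤ g → 1 ≤ k → k ≤ g → 1 ≤ l → l ≤ g →
      i ≠ j → i ≠ k → i ≠ l → j ≠ k → j ≠ l → k ≠ l → (Y i j * Y i k * Y i l) ^ 2 = 1)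
    (h4 : ∀ i j k, 1 ≤ i → i ≤ g - 1 → 1 ≤ j → j ≤ g - 1 → 1 ≤ k → k ≤ g - 1 →
      i ≠ j → i ≠ k → j ≠ k →
      (Y j i * Y i j * Y k j * Y j k * Y i k * Y k i) ^ 2 = 1)
    (h5 : ∀ i, 1 ≤ i → i ≤ g - 1 →
      ((((List.range' 1 (g - 1)).filter (fun k => k ≠ i)).map
        (fun k => Y k i * Y k g)).prod) * Y i g = Y g i)
    (N : Subgroup G)
    (hN : N = Subgroup.normalClosure
      {x : G | ∃ i j, 1 ≤ i ∧ i ≤ g ∧ 1 ≤ j ∧ j ≤ g ∧ i ≠ j ∧ x = (Y j i)⁻¹ * Y i j})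
    [N.Normal] :
    (∀ i j, 1 ≤ i → i < j → j ≤ g →
      (QuotientGroup.mk' N) (Y i j) = (QuotientGroup.mk' N) (Y j i)) ∧
    (∀ i j, 1 ≤ i → i ≤ g → 1 ≤ j → j ≤ g → i ≠ j →
      ((QuotientGroup.mk' N) (Y i j)) ^ 2 = 1) ∧
    (∀ i j k l, 1 ≤ i → i ≤ g → 1 ≤ j → j ≤ g → 1 ≤ k → k ≤ g → 1 ≤ l → l ≤ g →
      i ≠ j → k ≠ l →
      (QuotientGroup.mk' N) (Y i j) * (QuotientGroup.mk' N) (Y k l) =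
        (QuotientGroup.mk' N) (Y k l) * (QuotientGroup.mk' N) (Y i j)) ∧
    ((∀ x : G ⧸ N, x ^ 2 = 1) ∧ ∀ x y : G ⧸ N, x * y = y * x) :=
  quotient_by_N_elementary_abelian_general g Y hgen h1 h2a h2b h5 N hN
end
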